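/- For every n : ℕ and every k ≤ n, one has in ℚ: (∑ t in Finset.range (n+1), ((k+1 : ℚ)/(k+t+1)) * (n.choose (k+2*t)) * ((k+2*t).choose t))^2 ≤ ∑ t in Finset.range (2*n+1), ((2*n).choose (2*t) * catalan t : ℚ); i.e. the number of left cells with k through strands in Mo_n is at most the square root of |Mo_n| = Motz(2n). -/

import Mathlib

/-!
`L k n` is the Motzkin-triangle entry `T k n`: the number of Motzkin paths of length `n` from
height `0` to height `k` (pick the `k + 2t` non-flat steps, then a ballot sequence on them).
It obeys `T (k+1) (n+1) = T k n + T (k+1) n + T (k+2) n`, a step by a symmetric tridiagonal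
matrix, so a step can be moved from one factor of `∑ k, T k a * T k c` to the other; hence
`∑ k, T k a * T k c = T 0 (a + c)`, which is `Motz (a + c)`. For `a = c = n` the single term `k`
of this sum of squares is at most `Motz (2n)`.
-/

open Finset

namespace Motzkin

def ballotNumber (k t : ℕ) : ℚ :=
  (k + 1 : ℚ) / (k + t + 1) * (k + 2 * t).choose t

-- The reflection-principle form, written so that no truncated `t - 1` appears at `t = 0`.
theorem ballotNumber_eq_choose_sub_choose (k t : ℕ) :
    ballotNumber k t = (k + 2 * t).choose (k + t) - (k + 2 * t).choose (k + t + 1) := by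
  have hsymm : (k + 2 * t).choose t = (k + 2 * t).choose (k + t) := by
    rw [show k + 2 * t = k + t + t by ring, Nat.choose_symm_add]
  have hstep : ((k + 2 * t).choose (k + t + 1) : ℚ) * (k + t + 1) =
      (k + 2 * t).choose (k + t) * t := by
    have := Nat.choose_succ_right_eq (k + 2 * t) (k + t)
    rw [show k + 2 * t - (k + t) = t by omega] at this
    exact_mod_cast this
  rw [ballotNumber, hsymm, div_mul_eq_mul_div, div_eq_iff (by positivity)]
  linear_combination hstep

theorem ballotNumber_zero_right (k : ℕ) : ballotNumber k 0 = 1 := by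
  simp [ballotNumber_eq_choose_sub_choose]

theorem ballotNumber_zero_left (t : ℕ) : ballotNumber 0 t = catalan t := by
  have h : ((t + 1 : ℕ) : ℚ) * catalan t = (2 * t).choose t := by
    exact_mod_cast succ_mul_catalan_eq_centralBinom t
  simp only [ballotNumber, Nat.cast_zero, zero_add, ← h]
  push_cast
  field_simp

theorem ballotNumber_zero_succ (s : ℕ) : ballotNumber 0 (s + 1) = ballotNumber 1 s := by
  simp only [ballotNumber_eq_choose_sub_choose]
  have hsymm : (2 * s + 1).choose s = (2 * s + 1).choose (s + 1) := by
    rw [show 2 * s + 1 = s + (s + 1) by ring, Nat.choose_symm_add]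
  rw [show 0 + 2 * (s + 1) = 2 * s + 1 + 1 by ring, show 0 + (s + 1) = s + 1 by ring,
    show 1 + 2 * s = 2 * s + 1 by ring, show 1 + s = s + 1 by ring,
    Nat.choose_succ_succ' _ s, Nat.choose_succ_succ' _ (s + 1), hsymm]
  push_cast
  ring

theorem ballotNumber_succ_succ (k s : ℕ) :
    ballotNumber (k + 1) (s + 1) = ballotNumber k (s + 1) + ballotNumber (k + 2) s := by
  simp only [ballotNumber_eq_choose_sub_choose]
  rw [show k + 1 + 2 * (s + 1) = k + 2 * (s + 1) + 1 by ring,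
    show k + 1 + (s + 1) = k + (s + 1) + 1 by ring,
    show k + 2 + 2 * s = k + 2 * (s + 1) by ring, show k + 2 + s = k + (s + 1) + 1 by ring,
    Nat.choose_succ_succ' _ (k + (s + 1)), Nat.choose_succ_succ' _ (k + (s + 1) + 1)]
  push_cast
  ring

def motzkinTriangle (k n : ℕ) : ℚ :=
  ∑ t ∈ range (n + 1), (n.choose (k + 2 * t) : ℚ) * ballotNumber k t

theorem motzkinTriangle_eq_sum_range {k n N : ℕ} (hN : n + 1 ≤ N) :
    motzkinTriangle k n = ∑ t ∈ range N, (n.choose (k + 2 * t) : ℚ) * ballotNumber k t := by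
  refine sum_subset (range_subset_range.2 hN) fun t _ ht => ?_
  rw [Nat.choose_eq_zero_of_lt (by simp at ht; omega), Nat.cast_zero, zero_mul]

theorem motzkinTriangle_eq_choose_add_sum_range {k n N : ℕ} (hN : n ≤ N) :
    motzkinTriangle k n = n.choose k +
      ∑ s ∈ range N, (n.choose (k + 2 * (s + 1)) : ℚ) * ballotNumber k (s + 1) := by
  rw [motzkinTriangle_eq_sum_range (N := N + 1) (by omega), sum_range_succ',
    ballotNumber_zero_right, add_comm]
  simp

theorem motzkinTriangle_of_lt {k n : ℕ} (h : n < k) : motzkinTriangle k n = 0 :=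
  sum_eq_zero fun t _ => by rw [Nat.choose_eq_zero_of_lt (by omega), Nat.cast_zero, zero_mul]

theorem motzkinTriangle_zero_right (k : ℕ) :
    motzkinTriangle k 0 = if k = 0 then 1 else 0 := by
  cases k <;> simp [motzkinTriangle, ballotNumber_zero_right]

theorem motzkinTriangle_zero_succ (n : ℕ) :
    motzkinTriangle 0 (n + 1) = motzkinTriangle 0 n + motzkinTriangle 1 n := by
  have hterm (s : ℕ) : ((n + 1).choose (0 + 2 * (s + 1)) : ℚ) * ballotNumber 0 (s + 1) =
      (n.choose (0 + 2 * (s + 1)) : ℚ) * ballotNumber 0 (s + 1) +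
        (n.choose (1 + 2 * s) : ℚ) * ballotNumber 1 s := by
    rw [show 0 + 2 * (s + 1) = 1 + 2 * s + 1 by ring, Nat.choose_succ_succ',
      ballotNumber_zero_succ]
    push_cast
    ring
  rw [motzkinTriangle_eq_choose_add_sum_range le_rfl, sum_congr rfl fun s _ => hterm s,
    sum_add_distrib, motzkinTriangle_eq_choose_add_sum_range (Nat.le_succ n)]
  simp only [Nat.choose_zero_right, Nat.cast_one, motzkinTriangle]
  ring

theorem motzkinTriangle_succ_succ (k n : ℕ) :
    motzkinTriangle (k + 1) (n + 1) =
      motzkinTriangle k n + motzkinTriangle (k + 1) n + motzkinTriangle (k + 2) n := by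
  have hterm (s : ℕ) :
      ((n + 1).choose (k + 1 + 2 * (s + 1)) : ℚ) * ballotNumber (k + 1) (s + 1) =
        (n.choose (k + 2 * (s + 1)) : ℚ) * ballotNumber k (s + 1) +
          (n.choose (k + 1 + 2 * (s + 1)) : ℚ) * ballotNumber (k + 1) (s + 1) +
          (n.choose (k + 2 + 2 * s) : ℚ) * ballotNumber (k + 2) s := by
    rw [show k + 1 + 2 * (s + 1) = k + 2 * (s + 1) + 1 by ring, Nat.choose_succ_succ',
      ballotNumber_succ_succ, show k + 2 + 2 * s = k + 2 * (s + 1) by ring]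
    push_cast
    ring
  rw [motzkinTriangle_eq_choose_add_sum_range le_rfl, sum_congr rfl fun s _ => hterm s,
    sum_add_distrib, sum_add_distrib, Nat.choose_succ_succ',
    motzkinTriangle_eq_choose_add_sum_range (k := k) (Nat.le_succ n),
    motzkinTriangle_eq_choose_add_sum_range (k := k + 1) (Nat.le_succ n)]
  push_cast
  simp only [motzkinTriangle]
  ring

section Convolution

variable {a c M : ℕ}

theorem sum_motzkinTriangle_mul_succ (ha : a ≤ M) :
    ∑ k ∈ range (M + 1), motzkinTriangle k a * motzkinTriangle k (c + 1) =
      ∑ k ∈ range (M + 1), motzkinTriangle (k + 1) a * motzkinTriangle k c +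
        ∑ k ∈ range (M + 1), motzkinTriangle k a * motzkinTriangle k c +
        ∑ k ∈ range (M + 1), motzkinTriangle k a * motzkinTriangle (k + 1) c := by
  rw [sum_range_succ', motzkinTriangle_zero_succ]
  simp only [motzkinTriangle_succ_succ, mul_add, sum_add_distrib]
  rw [sum_range_succ' (fun k => motzkinTriangle k a * motzkinTriangle k c),
    sum_range_succ' (fun k => motzkinTriangle k a * motzkinTriangle (k + 1) c),
    sum_range_succ (fun k => motzkinTriangle (k + 1) a * motzkinTriangle k c),
    motzkinTriangle_of_lt (k := M + 1) (by omega)]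
  ring

theorem sum_motzkinTriangle_mul_succ_comm (ha : a ≤ M) (hc : c ≤ M) :
    ∑ k ∈ range (M + 1), motzkinTriangle k a * motzkinTriangle k (c + 1) =
      ∑ k ∈ range (M + 1), motzkinTriangle k (a + 1) * motzkinTriangle k c := by
  simp_rw [mul_comm _ (motzkinTriangle _ c)]
  rw [sum_motzkinTriangle_mul_succ ha, sum_motzkinTriangle_mul_succ hc]
  simp_rw [mul_comm (motzkinTriangle _ c)]
  ring

theorem sum_motzkinTriangle_mul (h : a + c ≤ M) :
    ∑ k ∈ range (M + 1), motzkinTriangle k a * motzkinTriangle k c = motzkinTriangle 0 (a + c) := by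
  induction c generalizing a with
  | zero =>
    simp_rw [motzkinTriangle_zero_right, mul_ite, mul_one, mul_zero]
    simp
  | succ c ih =>
    rw [sum_motzkinTriangle_mul_succ_comm (by omega) (by omega), ih (by omega),
      Nat.add_right_comm, add_assoc]

end Convolution

end Motzkin

open Motzkin in
theorem cell_size_sq_le_motzkin_general (n k : ℕ) :
    (∑ t ∈ Finset.range (n+1),
        ((k+1 : ℚ)/((k : ℚ)+(t : ℚ)+1)) * (n.choose (k+2*t) : ℚ) *
          ((k+2*t).choose t : ℚ))^2 ≤
      ∑ t ∈ Finset.range (2*n+1), ((2*n).choose (2*t) * catalan t : ℚ) := by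
  have hcell : ∑ t ∈ range (n + 1), (k + 1 : ℚ) / (k + t + 1) * (n.choose (k + 2 * t) : ℚ) *
      ((k + 2 * t).choose t : ℚ) = motzkinTriangle k n :=
    sum_congr rfl fun t _ => by rw [ballotNumber]; ring
  have hmonoid : ∑ t ∈ range (2 * n + 1), ((2 * n).choose (2 * t) * catalan t : ℚ) =
      motzkinTriangle 0 (2 * n) :=
    sum_congr rfl fun t _ => by rw [ballotNumber_zero_left, zero_add]
  rw [hcell, hmonoid, two_mul]
  calc motzkinTriangle k n ^ 2 = motzkinTriangle k n * motzkinTriangle k n := sq _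
    _ ≤ ∑ j ∈ range (k + (n + n) + 1), motzkinTriangle j n * motzkinTriangle j n :=
      single_le_sum (fun j _ => mul_self_nonneg (motzkinTriangle j n)) (mem_range.2 (by omega : k < k + (n + n) + 1))
    _ = motzkinTriangle 0 (n + n) := sum_motzkinTriangle_mul (by omega)

/-- The number of left cells with k through strands in Mo_n is at most
the square root of |Mo_n| = Motz(2n). -/
theorem cell_size_sq_le_motzkin (n k : ℕ) (hk : k ≤ n) :
    (∑ t ∈ Finset.range (n+1),
        ((k+1 : ℚ)/((k : ℚ)+(t : ℚ)+1)) * (n.choose (k+2*t) : ℚ) *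
          ((k+2*t).choose t : ℚ))^2 ≤
      ∑ t ∈ Finset.range (2*n+1), ((2*n).choose (2*t) * catalan t : ℚ) :=
  cell_size_sq_le_motzkin_general n k
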